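/- arXiv:1207.0565 — 3 statements merged into one kernel-verified Lean document; each statement's English description precedes it below -/
import Mathlib

section
/- Let u : (0,∞) → ℝ be bounded and measurable, let ū(λ) = ∫_0^∞ e^{-λ t} u(t) dt for λ > 0, and suppose lim_{σ→0⁺} σ ū(σ) = L. Then lim_{λ→0⁺} ∫_λ^∞ (λ/σ) ū(σ) dσ = L. -/
/-! Since `|u| ≤ C`, the function `σ ↦ σ ū(σ)` is bounded by `C` on `(0, ∞)`. Substituting
`σ = λ s` turns `∫_λ^∞ (λ/σ) ū(σ) dσ` into `∫_1^∞ s⁻² (λ s) ū(λ s) ds`, an average of `σ ū(σ)`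
against the probability density `s⁻²` on `(1, ∞)`; as `λ → 0⁺` the integrand tends pointwise
to `s⁻² L`, and dominated convergence gives the limit `L`. -/

open Real Set MeasureTheory Filter Topology

noncomputable def laplaceTransform (u : ℝ → ℝ) (σ : ℝ) : ℝ :=
  ∫ t in Ioi (0 : ℝ), exp (-σ * t) * u t

theorem measurable_laplaceTransform {u : ℝ → ℝ} (hu : Measurable u) :
    Measurable (laplaceTransform u) := by
  have : Measurable fun p : ℝ × ℝ => exp (-p.1 * p.2) * u p.2 := by fun_prop
  exact this.stronglyMeasurable.integral_prod_right'.measurable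

theorem abs_mul_laplaceTransform_le {u : ℝ → ℝ} {C : ℝ} (hu : ∀ t, |u t| ≤ C) {σ : ℝ}
    (hσ : 0 < σ) : |σ * laplaceTransform u σ| ≤ C := by
  have hexp : ∫ t in Ioi (0 : ℝ), C * exp (-σ * t) = C / σ := by
    rw [integral_const_mul, integral_exp_mul_Ioi (neg_lt_zero.2 hσ), mul_zero, exp_zero]
    field_simp
  have hle : |laplaceTransform u σ| ≤ C / σ := by
    rw [← hexp, ← norm_eq_abs]
    refine norm_integral_le_of_norm_le ((exp_neg_integrableOn_Ioi 0 hσ).const_mul C)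
      (Eventually.of_forall fun t => ?_)
    rw [norm_mul, norm_of_nonneg (exp_pos _).le, mul_comm, norm_eq_abs]
    exact mul_le_mul_of_nonneg_right (hu t) (exp_pos _).le
  rw [abs_mul, abs_of_pos hσ]
  exact (le_div_iff₀' hσ).1 hle

theorem setIntegral_Ioi_div_mul_eq {f : ℝ → ℝ} {l : ℝ} (hl : 0 < l) :
    ∫ σ in Ioi l, l / σ * f σ = ∫ s in Ioi 1, s ^ (-2 : ℝ) * (l * s * f (l * s)) := by
  rw [← mul_one l, ← integral_comp_mul_left_Ioi' _ 1 hl, mul_one, smul_eq_mul,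
    ← integral_const_mul]
  refine setIntegral_congr_fun measurableSet_Ioi fun s hs => ?_
  have hs : 0 < s := one_pos.trans hs
  rw [rpow_neg hs.le, rpow_two]
  field_simp

theorem tendsto_nhdsGT_mul_const_nhdsGT {s : ℝ} (hs : 0 < s) :
    Tendsto (fun l : ℝ => l * s) (𝓝[>] 0) (𝓝[>] 0) :=
  tendsto_nhdsWithin_of_tendsto_nhds_of_eventually_within _
    (by simpa using ((continuous_mul_const s).tendsto 0).mono_left nhdsWithin_le_nhds)
    (eventually_nhdsWithin_of_forall fun _ hl => mul_pos hl hs)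

theorem tendsto_setIntegral_mul_comp_mul {S : Set ℝ} (hS : MeasurableSet S) (hS0 : S ⊆ Ioi 0)
    {k g : ℝ → ℝ} {C L : ℝ} (hk : IntegrableOn k S) (hg : Measurable g)
    (hgC : ∀ σ, 0 < σ → |g σ| ≤ C) (hgL : Tendsto g (𝓝[>] 0) (𝓝 L)) :
    Tendsto (fun l => ∫ s in S, k s * g (l * s)) (𝓝[>] 0) (𝓝 ((∫ s in S, k s) * L)) := by
  rw [← integral_mul_const]
  refine tendsto_integral_filter_of_dominated_convergence (fun s => ‖k s‖ * C)
    (Eventually.of_forall fun l =>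
      hk.aestronglyMeasurable.mul (hg.comp (measurable_const_mul l)).aestronglyMeasurable)
    ?_ (hk.norm.mul_const C) ?_
  · filter_upwards [self_mem_nhdsWithin] with l (hl : 0 < l)
    filter_upwards [ae_restrict_mem hS] with s hs
    rw [norm_mul, norm_eq_abs (g _)]
    exact mul_le_mul_of_nonneg_left (hgC _ (mul_pos hl (hS0 hs))) (norm_nonneg _)
  · filter_upwards [ae_restrict_mem hS] with s hs
    exact ((hgL.comp (tendsto_nhdsGT_mul_const_nhdsGT (hS0 hs))).const_mul (k s))

theorem limit_integral_laplace (u : ℝ → ℝ) (C : ℝ) (hb : ∀ t, |u t| ≤ C)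
    (hm : Measurable u) (ubar : ℝ → ℝ)
    (hubar : ∀ l : ℝ, 0 < l → ubar l = ∫ t in Set.Ioi (0 : ℝ), Real.exp (-l * t) * u t)
    (L : ℝ)
    (hlim : Tendsto (fun σ : ℝ => σ * ubar σ) (nhdsWithin 0 (Set.Ioi 0)) (nhds L)) :
    Tendsto (fun l : ℝ => ∫ σ in Set.Ioi l, (l / σ) * ubar σ)
      (nhdsWithin 0 (Set.Ioi 0)) (nhds L) := by
  have hlim_laplace : Tendsto (fun σ => σ * laplaceTransform u σ) (𝓝[>] 0) (𝓝 L) :=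
    hlim.congr' (eventually_nhdsWithin_of_forall fun σ hσ => by rw [hubar σ hσ]; rfl)
  have havg := tendsto_setIntegral_mul_comp_mul (g := fun σ => σ * laplaceTransform u σ)
    measurableSet_Ioi (Ioi_subset_Ioi zero_le_one)
    (integrableOn_Ioi_rpow_of_lt (by norm_num : (-2 : ℝ) < -1) one_pos)
    (measurable_id.mul (measurable_laplaceTransform hm))
    (fun _ hσ => abs_mul_laplaceTransform_le hb hσ) hlim_laplace
  rw [integral_Ioi_rpow_of_lt (by norm_num) one_pos,
    show -(1 : ℝ) ^ ((-2 : ℝ) + 1) / (-2 + 1) = 1 by norm_num, one_mul] at havg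
  refine havg.congr' (eventually_nhdsWithin_of_forall fun l (hl : 0 < l) => ?_)
  calc _ = ∫ σ in Ioi l, l / σ * laplaceTransform u σ := (setIntegral_Ioi_div_mul_eq hl).symm
    _ = ∫ σ in Ioi l, l / σ * ubar σ :=
      setIntegral_congr_fun measurableSet_Ioi fun σ hσ => by rw [hubar σ (hl.trans hσ)]; rfl
end

section
/- Combining the above: if u : (0,∞) → ℝ is bounded and measurable and the limit lim_{λ→0⁺} λ ∫_0^∞ e^{-λ t} u(t) dt = L exists, then lim_{T→∞} (1/T) ∫_0^T u(t) dt = L. -/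
/-! Karamata's proof. Write `A_λ(φ) = λ ∫₀^∞ e^{-λt} φ(e^{-λt}) u(t) dt`, so that the hypothesis is
`A_λ(1) → L`. Rescaling `λ` gives `A_λ(xᵏ) = A_{(k+1)λ}(1)/(k+1) → L ∫₀¹ xᵏ`, hence
`A_λ(q) → L ∫₀¹ q` for every polynomial `q`. The substitution `x = e^{-λt}` and `|u| ≤ C` give
`|A_λ(φ)| ≤ C ∫₀¹ |φ|` uniformly in `λ`, and polynomials are dense in `L¹(0,1)`, so
`A_λ(φ) → L ∫₀¹ φ` for every integrable `φ`. For `φ = 𝟙_{[e⁻¹,1]} x⁻¹` the weight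
`e^{-λt} φ(e^{-λt})` is exactly the indicator of `t ≤ 1/λ`, so `A_λ(φ)` is the Cesàro mean
`λ ∫₀^{1/λ} u`, while `∫₀¹ φ = 1`. -/

open Real Set MeasureTheory Filter Topology Polynomial

lemma image_exp_neg_mul_Ioi_zero {l : ℝ} (hl : 0 < l) :
    (fun t => exp (-l * t)) '' Ioi 0 = Ioo 0 1 := by
  have : (fun t => -l * t) '' Ioi 0 = Iio 0 := by
    ext y
    constructor
    · rintro ⟨t, ht, rfl⟩
      exact mul_neg_of_neg_of_pos (neg_neg_of_pos hl) ht
    · intro hy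
      exact ⟨y / -l, div_pos_of_neg_of_neg hy (neg_neg_of_pos hl), by field_simp⟩
  rw [← image_image exp (fun t => -l * t), this, image_exp_Iio, exp_zero]

section ChangeOfVariables

variable {E : Type*} [NormedAddCommGroup E] [NormedSpace ℝ E] {l : ℝ}

lemma integral_comp_exp_neg_mul_Ioi (hl : 0 < l) (g : ℝ → E) :
    ∫ t in Ioi 0, (l * exp (-l * t)) • g (exp (-l * t)) = ∫ x in Ioo 0 1, g x := by
  rw [← image_exp_neg_mul_Ioi_zero hl]
  symm
  have := integral_image_eq_integral_abs_deriv_smul (measurableSet_Ioi (a := 0))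
    (f := fun t => exp (-l * t))
    (fun t _ => ((hasDerivAt_id t).const_mul (-l)).exp.hasDerivWithinAt)
    (fun t _ s _ h => mul_left_cancel₀ (neg_ne_zero.2 hl.ne') (exp_injective h)) g
  simpa [abs_of_pos (exp_pos _), abs_of_pos hl, mul_comm] using this

lemma integrableOn_comp_exp_neg_mul_Ioi (hl : 0 < l) (g : ℝ → E) :
    IntegrableOn (fun t => (l * exp (-l * t)) • g (exp (-l * t))) (Ioi 0) ↔
      IntegrableOn g (Ioo 0 1) := by
  rw [← image_exp_neg_mul_Ioi_zero hl]
  symm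
  have := integrableOn_image_iff_integrableOn_abs_deriv_smul (measurableSet_Ioi (a := 0))
    (f := fun t => exp (-l * t))
    (fun t _ => ((hasDerivAt_id t).const_mul (-l)).exp.hasDerivWithinAt)
    (fun t _ s _ h => mul_left_cancel₀ (neg_ne_zero.2 hl.ne') (exp_injective h)) g
  simpa [abs_of_pos (exp_pos _), abs_of_pos hl, mul_comm] using this

end ChangeOfVariables

lemma exists_polynomial_integral_abs_sub_lt {f : ℝ → ℝ} {a b ε : ℝ}
    (hf : IntegrableOn f (Ioo a b)) (hε : 0 < ε) :
    ∃ q : ℝ[X], ∫ x in Ioo a b, |f x - q.eval x| < ε := by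
  obtain ⟨g, hfg, hg⟩ := hf.exists_boundedContinuous_integral_sub_le (half_pos hε)
  set δ := ε / 2 / (volume.real (Ioo a b) + 1)
  obtain ⟨q, hq⟩ := exists_polynomial_near_of_continuousOn a b g g.continuous.continuousOn δ
    (by positivity)
  refine ⟨q, ?_⟩
  have hgq_int : IntegrableOn (fun x => |g x - q.eval x|) (Ioo a b) :=
    ((g.continuous.sub q.continuous).abs.integrableOn_Icc).mono_set Ioo_subset_Icc_self
  have hgq : ∫ x in Ioo a b, |g x - q.eval x| ≤ δ * volume.real (Ioo a b) := by
    refine (Real.le_norm_self _).trans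
      (norm_setIntegral_le_of_norm_le_const measure_Ioo_lt_top fun x hx => ?_)
    rw [Real.norm_eq_abs, abs_abs, abs_sub_comm]
    exact (hq x (Ioo_subset_Icc_self hx)).le
  have hδ : δ * volume.real (Ioo a b) < ε / 2 := by
    rw [div_mul_eq_mul_div, div_lt_iff₀ (by positivity)]
    nlinarith [measureReal_nonneg (μ := volume) (s := Ioo a b)]
  calc ∫ x in Ioo a b, |f x - q.eval x|
      ≤ ∫ x in Ioo a b, (|f x - g x| + |g x - q.eval x|) :=
        integral_mono (hf.sub (q.continuous.integrableOn_Icc.mono_set Ioo_subset_Icc_self)).abs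
          ((hf.sub hg).abs.add hgq_int) fun x => abs_sub_le _ _ _
    _ = (∫ x in Ioo a b, |f x - g x|) + ∫ x in Ioo a b, |g x - q.eval x| :=
        integral_add (hf.sub hg).abs hgq_int
    _ < ε := by simp only [Real.norm_eq_abs] at hfg; linarith

/-- `abelMean u 1 λ = λ ū(λ)`. -/
noncomputable def abelMean (u φ : ℝ → ℝ) (l : ℝ) : ℝ :=
  l * ∫ t in Ioi 0, exp (-l * t) * φ (exp (-l * t)) * u t

section AbelMean

variable {u φ ψ : ℝ → ℝ} {C l L : ℝ}

lemma integrableOn_abelMean_integrand (hu : AEStronglyMeasurable u) (hb : ∀ t, |u t| ≤ C)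
    (hφ : IntegrableOn φ (Ioo 0 1)) (hl : 0 < l) :
    IntegrableOn (fun t => exp (-l * t) * φ (exp (-l * t)) * u t) (Ioi 0) := by
  have h := ((integrableOn_comp_exp_neg_mul_Ioi hl φ).2 hφ).const_mul l⁻¹
  refine IntegrableOn.congr_fun (h.mul_bdd hu.restrict (ae_of_all _ hb)) (fun t _ => ?_)
    measurableSet_Ioi
  simp only [smul_eq_mul]
  field_simp

lemma abelMean_add (hu : AEStronglyMeasurable u) (hb : ∀ t, |u t| ≤ C)
    (hφ : IntegrableOn φ (Ioo 0 1)) (hψ : IntegrableOn ψ (Ioo 0 1)) (hl : 0 < l) :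
    abelMean u (φ + ψ) l = abelMean u φ l + abelMean u ψ l := by
  rw [abelMean, abelMean, abelMean, ← mul_add, ← integral_add
    (integrableOn_abelMean_integrand hu hb hφ hl) (integrableOn_abelMean_integrand hu hb hψ hl)]
  simp only [Pi.add_apply, add_mul, mul_add]

lemma abs_abelMean_le (hb : ∀ t, |u t| ≤ C) (hφ : IntegrableOn φ (Ioo 0 1)) (hl : 0 < l) :
    |abelMean u φ l| ≤ C * ∫ x in Ioo 0 1, |φ x| := by
  have hbound : IntegrableOn (fun t => (l * exp (-l * t)) • |φ (exp (-l * t))|) (Ioi 0) :=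
    (integrableOn_comp_exp_neg_mul_Ioi hl _).2 hφ.abs
  calc |abelMean u φ l|
      = ‖∫ t in Ioi 0, (l * exp (-l * t)) * φ (exp (-l * t)) * u t‖ := by
        simp only [abelMean, ← integral_const_mul, mul_assoc, Real.norm_eq_abs]
    _ ≤ ∫ t in Ioi 0, C * (l * exp (-l * t)) • |φ (exp (-l * t))| := by
        refine norm_integral_le_of_norm_le (hbound.const_mul C) (ae_of_all _ fun t => ?_)
        rw [norm_mul, norm_mul, Real.norm_eq_abs, Real.norm_eq_abs, Real.norm_eq_abs,
          abs_of_pos (by positivity : 0 < l * exp (-l * t)), smul_eq_mul, mul_comm C]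
        exact mul_le_mul_of_nonneg_left (hb t) (by positivity)
    _ = C * ∫ x in Ioo 0 1, |φ x| := by
        rw [integral_const_mul, integral_comp_exp_neg_mul_Ioi hl fun x => |φ x|]

lemma abelMean_const_mul (a : ℝ) : abelMean u (fun x => a * φ x) l = a * abelMean u φ l := by
  simp only [abelMean, ← integral_const_mul]
  congr 1
  funext t
  ring

lemma abelMean_pow (n : ℕ) :
    abelMean u (· ^ n) l = (n + 1 : ℝ)⁻¹ * abelMean u 1 ((n + 1) * l) := by
  have hexp : ∀ t, exp (-l * t) * exp (-l * t) ^ n = exp (-((n + 1) * l) * t) := by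
    intro t
    rw [← exp_nat_mul, ← exp_add]
    ring_nf
  simp only [abelMean, Pi.one_apply, mul_one, hexp]
  field_simp

lemma tendsto_abelMean_pow (habel : Tendsto (abelMean u 1) (𝓝[>] 0) (𝓝 L)) (n : ℕ) :
    Tendsto (abelMean u (· ^ n)) (𝓝[>] 0) (𝓝 (L * ∫ x in Ioo 0 1, x ^ n)) := by
  have hscale : Tendsto (fun l : ℝ => (n + 1) * l) (𝓝[>] 0) (𝓝[>] 0) :=
    tendsto_iff_comap.2 (comap_mulLeft_nhdsGT_zero (by positivity)).ge
  have hint : ∫ x in Ioo 0 1, x ^ n = (n + 1 : ℝ)⁻¹ := by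
    rw [← integral_Ioc_eq_integral_Ioo, ← intervalIntegral.integral_of_le zero_le_one,
      integral_pow]
    simp
  rw [hint, mul_comm]
  exact ((habel.comp hscale).const_mul _).congr fun _ => (abelMean_pow n).symm

lemma tendsto_abelMean_polynomial (hu : AEStronglyMeasurable u) (hb : ∀ t, |u t| ≤ C)
    (habel : Tendsto (abelMean u 1) (𝓝[>] 0) (𝓝 L)) (q : ℝ[X]) :
    Tendsto (abelMean u fun x => q.eval x) (𝓝[>] 0) (𝓝 (L * ∫ x in Ioo 0 1, q.eval x)) := by
  induction q using Polynomial.induction_on' with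
  | add p q hp hq =>
    have hint : ∀ r : ℝ[X], IntegrableOn (fun x => r.eval x) (Ioo 0 1) := fun r =>
      r.continuous.integrableOn_Icc.mono_set Ioo_subset_Icc_self
    simp only [eval_add]
    rw [integral_add (hint p) (hint q), mul_add]
    refine (hp.add hq).congr' ?_
    filter_upwards [self_mem_nhdsWithin] with l hl
    exact (abelMean_add hu hb (hint p) (hint q) hl).symm
  | monomial n a =>
    simp only [eval_monomial, integral_const_mul]
    rw [mul_left_comm]
    exact ((tendsto_abelMean_pow habel n).const_mul a).congr fun _ =>
      (abelMean_const_mul a).symm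

theorem tendsto_abelMean (hu : AEStronglyMeasurable u) (hb : ∀ t, |u t| ≤ C)
    (habel : Tendsto (abelMean u 1) (𝓝[>] 0) (𝓝 L)) (hφ : IntegrableOn φ (Ioo 0 1)) :
    Tendsto (abelMean u φ) (𝓝[>] 0) (𝓝 (L * ∫ x in Ioo 0 1, φ x)) := by
  rw [Metric.tendsto_nhds]
  intro ε hε
  have hC : 0 ≤ C := (abs_nonneg _).trans (hb 0)
  obtain ⟨q, hq⟩ := exists_polynomial_integral_abs_sub_lt hφ
    (by positivity : 0 < ε / 2 / (C + |L| + 1))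
  set p : ℝ → ℝ := fun x => q.eval x
  set δ := ∫ x in Ioo 0 1, |φ x - p x|
  have hp : IntegrableOn p (Ioo 0 1) :=
    q.continuous.integrableOn_Icc.mono_set Ioo_subset_Icc_self
  have hδ : (C + |L|) * δ < ε / 2 := by
    have hδ0 : 0 ≤ δ := integral_nonneg fun x => abs_nonneg _
    rw [lt_div_iff₀ (by positivity)] at hq
    nlinarith
  filter_upwards [Metric.tendsto_nhds.1 (tendsto_abelMean_polynomial hu hb habel q) (ε / 2)
    (half_pos hε), self_mem_nhdsWithin] with l hpl hl
  have hφp : dist (abelMean u φ l) (abelMean u p l) ≤ C * δ := by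
    have hsplit := abelMean_add hu hb (hφ.sub hp) hp hl
    rw [sub_add_cancel] at hsplit
    rw [Real.dist_eq, hsplit, add_sub_cancel_right]
    exact abs_abelMean_le hb (hφ.sub hp) hl
  have hpφ : dist (L * ∫ x in Ioo 0 1, p x) (L * ∫ x in Ioo 0 1, φ x) ≤ |L| * δ := by
    rw [Real.dist_eq, ← mul_sub, abs_mul, ← integral_sub hp hφ]
    gcongr
    exact abs_integral_le_integral_abs.trans_eq
      (integral_congr_ae (ae_of_all _ fun x => abs_sub_comm _ _))
  calc dist (abelMean u φ l) (L * ∫ x in Ioo 0 1, φ x)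
      ≤ dist (abelMean u φ l) (abelMean u p l)
          + dist (abelMean u p l) (L * ∫ x in Ioo 0 1, p x)
          + dist (L * ∫ x in Ioo 0 1, p x) (L * ∫ x in Ioo 0 1, φ x) := dist_triangle4 _ _ _ _
    _ < ε := by linarith

end AbelMean

noncomputable def karamataKernel : ℝ → ℝ := (Ici (exp (-1))).indicator fun x => x⁻¹

lemma integrableOn_karamataKernel : IntegrableOn karamataKernel (Ioo 0 1) := by
  rw [karamataKernel, integrableOn_indicator_iff measurableSet_Ici]
  have hinv : ContinuousOn (fun x : ℝ => x⁻¹) (Icc (exp (-1)) 1) :=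
    continuousOn_inv₀.mono fun x hx => ((exp_pos _).trans_le hx.1).ne'
  exact hinv.integrableOn_Icc.mono_set fun x hx => ⟨hx.1, hx.2.2.le⟩

lemma setIntegral_karamataKernel : ∫ x in Ioo 0 1, karamataKernel x = 1 := by
  have hsupp : Ici (exp (-1)) ∩ Ioo 0 1 = Ico (exp (-1)) 1 := by
    ext x
    simp only [mem_inter_iff, mem_Ici, mem_Ioo, mem_Ico]
    exact ⟨fun h => ⟨h.1, h.2.2⟩, fun h => ⟨h.1, (exp_pos _).trans_le h.1, h.2⟩⟩
  rw [karamataKernel, setIntegral_indicator measurableSet_Ici, inter_comm, hsupp,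
    integral_Ico_eq_integral_Ioo, ← integral_Ioc_eq_integral_Ioo,
    ← intervalIntegral.integral_of_le (exp_le_one_iff.2 (by norm_num)),
    integral_inv_of_pos (exp_pos _) one_pos, one_div, ← exp_neg, neg_neg, log_exp]

lemma exp_neg_mul_mul_karamataKernel {l : ℝ} (hl : 0 < l) (u : ℝ → ℝ) (t : ℝ) :
    exp (-l * t) * karamataKernel (exp (-l * t)) * u t = (Iic l⁻¹).indicator u t := by
  have hmem : exp (-l * t) ∈ Ici (exp (-1)) ↔ t ∈ Iic l⁻¹ := by
    rw [mem_Ici, mem_Iic, exp_le_exp, ← one_div, le_div_iff₀ hl]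
    constructor <;> intro <;> linarith
  by_cases ht : t ∈ Iic l⁻¹
  · rw [karamataKernel, indicator_of_mem (hmem.2 ht), indicator_of_mem ht,
      mul_inv_cancel₀ (exp_pos _).ne', one_mul]
  · rw [karamataKernel, indicator_of_notMem (mt hmem.1 ht), indicator_of_notMem ht, mul_zero,
      zero_mul]

lemma abelMean_karamataKernel (u : ℝ → ℝ) {l : ℝ} (hl : 0 < l) :
    abelMean u karamataKernel l = l * ∫ t in 0..l⁻¹, u t := by
  simp only [abelMean, exp_neg_mul_mul_karamataKernel hl]
  rw [setIntegral_indicator measurableSet_Iic, Ioi_inter_Iic,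
    intervalIntegral.integral_of_le (inv_pos.2 hl).le]

theorem tauberian_cesaro_of_abel (u : ℝ → ℝ) (C : ℝ) (hb : ∀ t, |u t| ≤ C)
    (hm : Measurable u) (L : ℝ)
    (hlim : Tendsto (fun l : ℝ => l * ∫ t in Set.Ioi (0 : ℝ), Real.exp (-l * t) * u t)
      (nhdsWithin 0 (Set.Ioi 0)) (nhds L)) :
    Tendsto (fun T : ℝ => (1 / T) * ∫ t in (0 : ℝ)..T, u t) atTop (nhds L) := by
  have habel : Tendsto (abelMean u 1) (𝓝[>] 0) (𝓝 L) :=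
    hlim.congr fun l => by simp only [abelMean, Pi.one_apply, mul_one]
  have hkernel := tendsto_abelMean hm.aestronglyMeasurable hb habel integrableOn_karamataKernel
  rw [setIntegral_karamataKernel, mul_one] at hkernel
  refine (hkernel.comp tendsto_inv_atTop_nhdsGT_zero).congr' ?_
  filter_upwards [eventually_gt_atTop 0] with T hT
  rw [Function.comp_apply, abelMean_karamataKernel u (inv_pos.2 hT), inv_inv, one_div]
end

section
/- Let x, x_m ∈ ℝ³ with |x − x_m| ≥ d > 0, let a > 0, and let s' ∈ ℝ³ with |s' − x_m| ≤ a ≤ d/2. Then for every λ ≥ 0, |e^{-√λ|x−s'|}/(4π|x−s'|) − e^{-√λ|x−x_m|}/(4π|x−x_m|)| ≤ C·a/|x−x_m|² · max(1, √λ|x−x_m|e^{-√λ|x−x_m|/2}) for an absolute constant C. -/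
open Real Set

noncomputable def yukawa (x y : EuclideanSpace ℝ (Fin 3)) (l : ℝ) : ℝ :=
  Real.exp (-(Real.sqrt l * ‖x - y‖)) / (4 * Real.pi * ‖x - y‖)

lemma exp_neg_sub_exp_neg_le {u v : ℝ} (h : u ≤ v) :
    Real.exp (-u) - Real.exp (-v) ≤ (v - u) * Real.exp (-u) := by
  have h1 : (-(v - u)) + 1 ≤ Real.exp (-(v - u)) := Real.add_one_le_exp _
  have h2 : Real.exp (-v) = Real.exp (-u) * Real.exp (-(v - u)) := by
    rw [← Real.exp_add]; ring_nf
  nlinarith [Real.exp_pos (-u), mul_nonneg (Real.exp_pos (-u)).le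
    (by linarith : (0:ℝ) ≤ (v - u) - (1 - Real.exp (-(v - u))))]

set_option maxHeartbeats 1000000 in
lemma yukawa_real_est (μ r R a : ℝ) (hμ0 : 0 ≤ μ) (hR : 0 < R) (ha : 0 < a)
    (hrR1 : R - r ≤ a) (hrR2 : r - R ≤ a) (haR : a ≤ R / 2) :
    |Real.exp (-(μ * r)) / (4 * π * r) - Real.exp (-(μ * R)) / (4 * π * R)| ≤
      1 * a / R ^ 2 * max 1 (μ * R * Real.exp (-(μ * R) / 2)) := by
  have hπ : (3 : ℝ) ≤ π := by linarith [Real.pi_gt_three]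
  have hr2 : R / 2 ≤ r := by linarith
  have hr0 : 0 < r := by linarith
  set A : ℝ := Real.exp (-(μ * r)) with hAdef
  set B : ℝ := Real.exp (-(μ * R)) with hBdef
  set E : ℝ := Real.exp (-(μ * R) / 2) with hEdef
  set M : ℝ := max 1 (μ * R * E) with hMdef
  have hM1 : (1 : ℝ) ≤ M := le_max_left _ _
  have hM2 : μ * R * E ≤ M := le_max_right _ _
  have hE0 : 0 < E := Real.exp_pos _
  have hA0 : 0 < A := Real.exp_pos _
  have hB0 : 0 < B := Real.exp_pos _
  have hB1 : B ≤ 1 := by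
    rw [hBdef, ← Real.exp_zero]
    exact Real.exp_le_exp.2 (by nlinarith)
  have hAE : A ≤ E := Real.exp_le_exp.2 (by nlinarith)
  have hBE : B ≤ E := Real.exp_le_exp.2 (by nlinarith)
  have key1 : |A - B| ≤ μ * a * E := by
    rcases le_total r R with h | h
    · have hAB : B ≤ A := Real.exp_le_exp.2 (by nlinarith)
      rw [abs_of_nonneg (by linarith)]
      have haux := exp_neg_sub_exp_neg_le (mul_le_mul_of_nonneg_left h hμ0)
      rw [← hAdef, ← hBdef] at haux
      calc A - B ≤ (μ * R - μ * r) * A := haux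
        _ ≤ (μ * a) * A := by
            apply mul_le_mul_of_nonneg_right _ hA0.le
            nlinarith
        _ ≤ μ * a * E := mul_le_mul_of_nonneg_left hAE (mul_nonneg hμ0 ha.le)
    · have hAB : A ≤ B := Real.exp_le_exp.2 (by nlinarith)
      rw [abs_of_nonpos (by linarith), neg_sub]
      have haux := exp_neg_sub_exp_neg_le (mul_le_mul_of_nonneg_left h hμ0)
      rw [← hAdef, ← hBdef] at haux
      calc B - A ≤ (μ * r - μ * R) * B := haux
        _ ≤ (μ * a) * B := by
            apply mul_le_mul_of_nonneg_right _ hB0.le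
            nlinarith
        _ ≤ μ * a * E := mul_le_mul_of_nonneg_left hBE (mul_nonneg hμ0 ha.le)
  have hsplit : A / (4 * π * r) - B / (4 * π * R)
      = (A - B) / (4 * π * r) + B * (R - r) / (4 * π * r * R) := by
    field_simp
    ring
  have hden1 : 0 < 4 * π * r := by positivity
  have hden2 : 0 < 4 * π * r * R := by positivity
  have h1 : |(A - B) / (4 * π * r)| ≤ a * M / (2 * R ^ 2) := by
    rw [abs_div, abs_of_pos hden1, div_le_div_iff₀ hden1 (by positivity)]
    have haM : 0 ≤ a * M := mul_nonneg ha.le (by linarith)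
    have h4 : 2 * R ≤ 4 * π * r := by
      nlinarith [mul_le_mul_of_nonneg_left hr2 Real.pi_pos.le,
        mul_nonneg (by linarith : (0:ℝ) ≤ π - 3) hR.le]
    calc |A - B| * (2 * R ^ 2)
        ≤ (μ * a * E) * (2 * R ^ 2) := mul_le_mul_of_nonneg_right key1 (by positivity)
      _ = (μ * R * E) * (2 * a * R) := by ring
      _ ≤ M * (2 * a * R) := mul_le_mul_of_nonneg_right hM2 (by positivity)
      _ = (a * M) * (2 * R) := by ring
      _ ≤ (a * M) * (4 * π * r) := mul_le_mul_of_nonneg_left h4 haM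
      _ = a * M * (4 * π * r) := by ring
  have h2 : |B * (R - r) / (4 * π * r * R)| ≤ a * M / (2 * R ^ 2) := by
    rw [abs_div, abs_of_pos hden2, div_le_div_iff₀ hden2 (by positivity)]
    have hnum : |B * (R - r)| ≤ a := by
      rw [abs_mul, abs_of_pos hB0]
      calc B * |R - r| ≤ 1 * a := by
            refine mul_le_mul hB1 ?_ (abs_nonneg _) zero_le_one
            rw [abs_le]; constructor <;> linarith
        _ = a := one_mul a
    have haM : 0 ≤ a * M := mul_nonneg ha.le (by linarith)
    calc |B * (R - r)| * (2 * R ^ 2)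
        ≤ a * (2 * R ^ 2) := mul_le_mul_of_nonneg_right hnum (by positivity)
      _ ≤ (a * M) * (2 * R ^ 2) := by
          apply mul_le_mul_of_nonneg_right _ (by positivity)
          nlinarith
      _ ≤ a * M * (4 * π * r * R) := by
          apply mul_le_mul_of_nonneg_left _ haM
          nlinarith [mul_le_mul_of_nonneg_left hr2 (by positivity : (0:ℝ) ≤ 4 * π * R),
            mul_nonneg (by linarith : (0:ℝ) ≤ π - 3) (sq_nonneg R)]
  calc |A / (4 * π * r) - B / (4 * π * R)|
      = |(A - B) / (4 * π * r) + B * (R - r) / (4 * π * r * R)| := by rw [hsplit]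
    _ ≤ |(A - B) / (4 * π * r)| + |B * (R - r) / (4 * π * r * R)| := abs_add_le _ _
    _ ≤ a * M / (2 * R ^ 2) + a * M / (2 * R ^ 2) := add_le_add h1 h2
    _ = 1 * a / R ^ 2 * M := by field_simp; ring

theorem yukawa_kernel_variation_estimate :
    ∃ C : ℝ, 0 < C ∧
      ∀ (x xm s' : EuclideanSpace ℝ (Fin 3)) (d a l : ℝ),
        0 < d → d ≤ ‖x - xm‖ → 0 < a → ‖s' - xm‖ ≤ a → a ≤ d / 2 → 0 ≤ l →
        |yukawa x s' l - yukawa x xm l| ≤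
          C * a / ‖x - xm‖ ^ 2 *
            max 1 (Real.sqrt l * ‖x - xm‖ * Real.exp (-(Real.sqrt l * ‖x - xm‖) / 2)) := by
  refine ⟨1, one_pos, ?_⟩
  intro x xm s' d a l hd hdR ha hsa had hl
  have hR : 0 < ‖x - xm‖ := lt_of_lt_of_le hd hdR
  have haR : a ≤ ‖x - xm‖ / 2 := le_trans had (by linarith)
  have hrR : |‖x - s'‖ - ‖x - xm‖| ≤ a := by
    have h1 : |‖x - s'‖ - ‖x - xm‖| ≤ ‖(x - s') - (x - xm)‖ :=
      abs_norm_sub_norm_le _ _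
    have h2 : (x - s') - (x - xm) = xm - s' := by abel
    rw [h2, norm_sub_rev xm s'] at h1
    exact h1.trans hsa
  obtain ⟨hrR1, hrR2⟩ := abs_le.mp hrR
  exact yukawa_real_est (Real.sqrt l) ‖x - s'‖ ‖x - xm‖ a (Real.sqrt_nonneg l) hR ha
    (by linarith) (by linarith) haR
end
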